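/- Let M be a module over C_n ⋊ ℂS_n. Then the following operators on ℂ[x_1,…,x_n] ⊗ M define a representation of H^c_{A_{n−1}}(u) (namely the induced module from the subalgebra generated by C_n ⋊ ℂS_n and y_1,…,y_n, with each y_i acting on M by zero): each x_i acts by multiplication by x_i in the first factor; w ∈ S_n acts by w·(f ⊗ m) = f^w ⊗ wm; c_i acts by c_i·(f ⊗ m) = f^{τ_i} ⊗ c_i m, where f^{τ_i} is f with x_i replaced by −x_i; and y_i acts by the Dunkl operator y_i·(f ⊗ m) = −u·Σ_{k≠i} ( g_k ⊗ s_{ki} m + h_k ⊗ c_k c_i s_{ki} m ), where g_k, h_k ∈ ℂ[x_1,…,x_n] are the unique polynomials with (x_i − x_k)·g_k = f − f^{s_{ki}} and (x_i + x_k)·h_k = f − f^{s̄_{ki}}; here f^{s_{ki}} is f with x_i and x_k interchanged, and f^{s̄_{ki}} is f with x_i replaced by −x_k and x_k replaced by −x_i. -/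

import Mathlib

noncomputable section

abbrev SignFn (n : ℕ) := Fin n → ℤˣ

/-- The permutation action on sign functions. -/
def permAut (n : ℕ) : Equiv.Perm (Fin n) →* MulAut (SignFn n) where
  toFun σ :=
    { toFun := fun f => f ∘ σ.symm
      invFun := fun f => f ∘ σ
      left_inv := fun f => by ext k; simp
      right_inv := fun f => by ext k; simp
      map_mul' := fun f g => rfl }
  map_one' := by ext f k; simp [Equiv.Perm.one_def]
  map_mul' := fun σ τ => by
    ext f k
    show (f ((σ * τ).symm k) : ℤ) = f (τ.symm (σ.symm k))
    rw [Equiv.Perm.mul_def, Equiv.symm_trans_apply]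

/-- The hyperoctahedral group `W_{B_n}` of signed permutations, as a semidirect product. -/
abbrev WB (n : ℕ) := SignFn n ⋊[permAut n] Equiv.Perm (Fin n)

/-- the transposition `s_{ij}` in `W_{B_n}`. -/
def sB {n : ℕ} (i j : Fin n) : WB n := ⟨1, Equiv.swap i j⟩

/-- the transposition with sign changes `s̄_{ij}` in `W_{B_n}`. -/
def sbarB {n : ℕ} (i j : Fin n) : WB n :=
  ⟨fun k => if k = i ∨ k = j then -1 else 1, Equiv.swap i j⟩

/-- the sign change `τ_i` at `i` in `W_{B_n}`. -/
def tauB {n : ℕ} (i : Fin n) : WB n := ⟨fun k => if k = i then -1 else 1, 1⟩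

/-- The signed-permutation action of `w ∈ W_{B_n}` on a basis vector `e_i`:
`w(e_i) = (sign) • e_{(index)}`; we record the pair (sign, index). -/
def actB {n : ℕ} (w : WB n) (i : Fin n) : ℂ × Fin n :=
  (((w.left (w.right i) : ℤ) : ℂ), w.right i)

/-- `W_{D_n}` as the subgroup of even signed permutations inside `W_{B_n}`. -/
def WDsub (n : ℕ) : Subgroup (WB n) where
  carrier := {w | ∏ k, w.left k = 1}
  one_mem' := by simp
  mul_mem' := by
    intro a b ha hb
    simp only [Set.mem_setOf_eq] at *
    have h1 : (a * b).left = a.left * (permAut n a.right) b.left := rfl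
    rw [h1]
    rw [show (∏ k, (a.left * (permAut n a.right) b.left) k) = (∏ k, a.left k) * ∏ k, (permAut n a.right) b.left k from Finset.prod_mul_distrib, ha, one_mul]
    calc ∏ k, (permAut n a.right) b.left k = ∏ k, b.left (a.right.symm k) := rfl
      _ = ∏ k, b.left k := Equiv.prod_comp a.right.symm b.left
      _ = 1 := hb
  inv_mem' := by
    intro a ha
    simp only [Set.mem_setOf_eq] at *
    have h1 : (a⁻¹).left = (permAut n a.right⁻¹) a.left⁻¹ := rfl
    rw [h1]
    calc ∏ k, (permAut n a.right⁻¹) a.left⁻¹ k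
        = ∏ k, a.left⁻¹ ((a.right⁻¹).symm k) := rfl
      _ = ∏ k, (a.left k)⁻¹ := Equiv.prod_comp _ _
      _ = (∏ k, a.left k)⁻¹ := by rw [← Finset.prod_inv_distrib]
      _ = 1 := by rw [ha]; simp

lemma sB_mem {n : ℕ} (i j : Fin n) : sB i j ∈ WDsub n := by
  simp [WDsub, sB]

lemma sbarB_mem {n : ℕ} {i j : Fin n} (h : i ≠ j) : sbarB i j ∈ WDsub n := by
  show ∏ k, (if k = i ∨ k = j then (-1 : ℤˣ) else 1) = 1
  have step : ∀ k, (if k = i ∨ k = j then (-1 : ℤˣ) else 1)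
      = (if k = i then -1 else 1) * (if k = j then -1 else 1) := by
    intro k
    by_cases h1 : k = i <;> by_cases h2 : k = j <;> simp_all
  simp_rw [step, Finset.prod_mul_distrib, Finset.prod_ite_eq', Finset.mem_univ, if_true]
  norm_num

/-- the transposition `s_{ij}` as an element of `W_{D_n}`. -/
def sD {n : ℕ} (i j : Fin n) : WDsub n := ⟨sB i j, sB_mem i j⟩

/-- the transposition with sign changes `s̄_{ij}` as an element of `W_{D_n}` (junk value `1`
when `i = j`). -/
def sbarD {n : ℕ} (i j : Fin n) : WDsub n :=
  if h : i = j then 1 else ⟨sbarB i j, sbarB_mem h⟩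

/-- The signed-permutation action for `W_{D_n}`. -/
def actD {n : ℕ} (w : WDsub n) (i : Fin n) : ℂ × Fin n := actB w.1 i

/-- The (trivially signed) permutation action of `S_n`. -/
def actA (n : ℕ) (σ : Equiv.Perm (Fin n)) (i : Fin n) : ℂ × Fin n := (1, σ i)

/-- Generators of a rational double affine Hecke-Clifford algebra:
`x_i`, `y_i`, Clifford generators `c_i`, and group elements `w ∈ W`. -/
inductive HGen (n : ℕ) (G : Type) : Type
  | x : Fin n → HGen n G
  | y : Fin n → HGen n G
  | c : Fin n → HGen n G
  | g : G → HGen n G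

/-- The free algebra on the generators. -/
abbrev HF (n : ℕ) (G : Type) := FreeAlgebra ℂ (HGen n G)

def hX {n : ℕ} {G : Type} (i : Fin n) : HF n G := FreeAlgebra.ι ℂ (HGen.x i)
def hY {n : ℕ} {G : Type} (i : Fin n) : HF n G := FreeAlgebra.ι ℂ (HGen.y i)
def hC {n : ℕ} {G : Type} (i : Fin n) : HF n G := FreeAlgebra.ι ℂ (HGen.c i)
def hG {n : ℕ} {G : Type} (w : G) : HF n G := FreeAlgebra.ι ℂ (HGen.g w)

/-- The defining relations of a rational double affine Hecke-Clifford algebra, where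
`act w i = (sign, index)` records the (signed) permutation action `w(e_i) = sign • e_index`
of the group `W` on the basis vectors, and `R j i` is the prescribed value of the
commutator `[y_j, x_i]`. -/
inductive HRel (n : ℕ) (G : Type) [Group G] (act : G → Fin n → ℂ × Fin n)
    (R : Fin n → Fin n → HF n G) : HF n G → HF n G → Prop
  | cc (i : Fin n) : HRel n G act R (hC i * hC i) 1
  | canti {i j : Fin n} (h : i ≠ j) : HRel n G act R (hC i * hC j) (-(hC j * hC i))
  | xx (i j : Fin n) : HRel n G act R (hX i * hX j) (hX j * hX i)
  | yy (i j : Fin n) : HRel n G act R (hY i * hY j) (hY j * hY i)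
  | yc (i j : Fin n) : HRel n G act R (hY i * hC j) (hC j * hY i)
  | xcs (i : Fin n) : HRel n G act R (hX i * hC i) (-(hC i * hX i))
  | xc {i j : Fin n} (h : i ≠ j) : HRel n G act R (hX i * hC j) (hC j * hX i)
  | gone : HRel n G act R (hG (1 : G)) 1
  | gmul (w w' : G) : HRel n G act R (hG w * hG w') (hG (w * w'))
  | gx (w : G) (i : Fin n) :
      HRel n G act R (hG w * hX i) ((act w i).1 • (hX (act w i).2 * hG w))
  | gy (w : G) (i : Fin n) :
      HRel n G act R (hG w * hY i) ((act w i).1 • (hY (act w i).2 * hG w))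
  | gc (w : G) (i : Fin n) :
      HRel n G act R (hG w * hC i) ((act w i).1 • (hC (act w i).2 * hG w))
  | yx (j i : Fin n) : HRel n G act R (hY j * hX i) (hX i * hY j + R j i)

/-- A rational double affine Hecke-Clifford algebra, presented by generators and relations. -/
abbrev DaHCa (n : ℕ) (G : Type) [Group G] (act : G → Fin n → ℂ × Fin n)
    (R : Fin n → Fin n → HF n G) := RingQuot (HRel n G act R)

variable {n : ℕ} {G : Type} [Group G] {act : G → Fin n → ℂ × Fin n}
  {R : Fin n → Fin n → HF n G}

def dX (act : G → Fin n → ℂ × Fin n) (R : Fin n → Fin n → HF n G) (i : Fin n) :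
    DaHCa n G act R := RingQuot.mkAlgHom ℂ (HRel n G act R) (hX i)
def dY (act : G → Fin n → ℂ × Fin n) (R : Fin n → Fin n → HF n G) (i : Fin n) :
    DaHCa n G act R := RingQuot.mkAlgHom ℂ (HRel n G act R) (hY i)
def dC (act : G → Fin n → ℂ × Fin n) (R : Fin n → Fin n → HF n G) (i : Fin n) :
    DaHCa n G act R := RingQuot.mkAlgHom ℂ (HRel n G act R) (hC i)
def dG (act : G → Fin n → ℂ × Fin n) (R : Fin n → Fin n → HF n G) (w : G) :
    DaHCa n G act R := RingQuot.mkAlgHom ℂ (HRel n G act R) (hG w)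

/-- The right-hand side of the commutation relations `[y_j, x_i]` in the rational
DaHCa of type `A_{n-1}`:  `[y_j,x_i] = u(1+c_j c_i)s_{ji}` for `i ≠ j` and
`[y_i,x_i] = -u Σ_{k≠i} (1+c_k c_i)s_{ki}`. -/
def RA (n : ℕ) (u : ℂ) (j i : Fin n) : HF n (Equiv.Perm (Fin n)) :=
  if j = i then
    -(u • ∑ k ∈ Finset.univ.erase i, (1 + hC k * hC i) * hG (Equiv.swap k i))
  else
    u • ((1 + hC j * hC i) * hG (Equiv.swap j i))

/-- The rational double affine Hecke-Clifford algebra of type `A_{n-1}`. -/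
abbrev HCA (n : ℕ) (u : ℂ) := DaHCa n (Equiv.Perm (Fin n)) (actA n) (RA n u)

def xA {n : ℕ} {u : ℂ} (i : Fin n) : HCA n u := dX (actA n) (RA n u) i
def yA {n : ℕ} {u : ℂ} (i : Fin n) : HCA n u := dY (actA n) (RA n u) i
def cA {n : ℕ} {u : ℂ} (i : Fin n) : HCA n u := dC (actA n) (RA n u) i
def gA {n : ℕ} {u : ℂ} (w : Equiv.Perm (Fin n)) : HCA n u := dG (actA n) (RA n u) w

/-- Generators of the smash product `C_n ⋊ ℂW`: Clifford generators `c_i` and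
group elements `w ∈ W`. -/
inductive KGen (n : ℕ) (G : Type) : Type
  | c : Fin n → KGen n G
  | g : G → KGen n G

abbrev KF (n : ℕ) (G : Type) := FreeAlgebra ℂ (KGen n G)

def kfC {n : ℕ} {G : Type} (i : Fin n) : KF n G := FreeAlgebra.ι ℂ (KGen.c i)
def kfG {n : ℕ} {G : Type} (w : G) : KF n G := FreeAlgebra.ι ℂ (KGen.g w)

/-- The defining relations of the smash product `C_n ⋊ ℂW`: the Clifford relations,
the group algebra relations, and `w c_i w^{-1} = w(c_i)` where `w(c_i)` is given by the
(signed) permutation action `act`. -/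
inductive KRel (n : ℕ) (G : Type) [Group G] (act : G → Fin n → ℂ × Fin n) :
    KF n G → KF n G → Prop
  | cc (i : Fin n) : KRel n G act (kfC i * kfC i) 1
  | canti {i j : Fin n} (h : i ≠ j) : KRel n G act (kfC i * kfC j) (-(kfC j * kfC i))
  | gone : KRel n G act (kfG (1 : G)) 1
  | gmul (w w' : G) : KRel n G act (kfG w * kfG w') (kfG (w * w'))
  | gc (w : G) (i : Fin n) :
      KRel n G act (kfG w * kfC i) ((act w i).1 • (kfC (act w i).2 * kfG w))

/-- The smash product `C_n ⋊ ℂW`, presented by generators and relations. -/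
abbrev Smash (n : ℕ) (G : Type) [Group G] (act : G → Fin n → ℂ × Fin n) :=
  RingQuot (KRel n G act)

def kC {n : ℕ} {G : Type} [Group G] (act : G → Fin n → ℂ × Fin n) (i : Fin n) :
    Smash n G act := RingQuot.mkAlgHom ℂ (KRel n G act) (kfC i)
def kG {n : ℕ} {G : Type} [Group G] (act : G → Fin n → ℂ × Fin n) (w : G) :
    Smash n G act := RingQuot.mkAlgHom ℂ (KRel n G act) (kfG w)

open scoped TensorProduct

/-!
The divided differences `(f - f^{s_{ki}}) / (x_i - x_k)` and `(f - f^{s̄_{ki}}) / (x_i + x_k)`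
exist because the divisibility holds on the generators `x_j` and propagates through sums and
products; being unique, they are equivariant under the substitutions `f ↦ f^w` and
`f ↦ f^{τ_j}`, and they satisfy a twisted Leibniz rule `D(x_j f) = x_j D(f) + D(x_j) f^s`.
Equivariance gives the relations of the `y_i` with `w` and `c_j`, the Leibniz rule gives
`[y_j, x_i]`. For `[y_i, y_j] = 0`: by the Jacobi identity `[[y_i, y_j], x_k]` equals
`[y_i, [y_j, x_k]] - [y_j, [y_i, x_k]]`, which vanishes because `y_a` moves past the reflection
terms of `[y, x]` as `y_a (1 + c_j c_k) s_{jk} = (1 + c_j c_k) s_{jk} y_{s_{jk}(a)}`. So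
`[y_i, y_j]` is `ℂ[x]`-linear; it kills `1 ⊗ M`, which generates `ℂ[x] ⊗ M` over `ℂ[x]`.
-/

namespace MvPolynomial

open TensorProduct in
theorem eq_zero_of_commute_rTensor_mulLeft_X {σ R M : Type*} [CommRing R] [AddCommGroup M]
    [Module R M] {T : Module.End R (MvPolynomial σ R ⊗[R] M)}
    (h1 : ∀ m, T (1 ⊗ₜ m) = 0) (hX : ∀ i, Commute T ((LinearMap.mulLeft R (X i)).rTensor M)) :
    T = 0 := by
  refine TensorProduct.ext' fun f m => ?_
  rw [LinearMap.zero_apply]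
  induction f using MvPolynomial.induction_on with
  | C a => rw [C_eq_smul_one, ← smul_tmul', map_smul, h1, smul_zero]
  | add p q hp hq => rw [add_tmul, map_add, hp, hq, add_zero]
  | mul_X p j hp =>
    have := LinearMap.congr_fun (hX j).eq (p ⊗ₜ m)
    rwa [Module.End.mul_apply, Module.End.mul_apply, LinearMap.rTensor_tmul,
      LinearMap.mulLeft_apply, hp, map_zero, ← mul_comm] at this

variable {σ R : Type*} [CommRing R]

theorem dvd_sub_map_of_dvd_X_sub {d : MvPolynomial σ R}
    {φ : MvPolynomial σ R →ₐ[R] MvPolynomial σ R} (h : ∀ j, d ∣ X j - φ (X j))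
    (f : MvPolynomial σ R) : d ∣ f - φ f := by
  induction f using MvPolynomial.induction_on with
  | C a => simp
  | add p q hp hq => simpa only [map_add, add_sub_add_comm] using dvd_add hp hq
  | mul_X p j hp =>
    rw [map_mul, show p * X j - φ p * φ (X j) = (p - φ p) * X j + φ p * (X j - φ (X j)) by ring]
    exact dvd_add (hp.mul_right _) ((h j).mul_left _)

theorem X_sub_X_ne_zero [Nontrivial R] {i k : σ} (h : k ≠ i) :
    (X i - X k : MvPolynomial σ R) ≠ 0 :=
  sub_ne_zero.2 (X_injective.ne h.symm)

theorem X_add_X_ne_zero [Nontrivial R] {i k : σ} (h : k ≠ i) :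
    (X i + X k : MvPolynomial σ R) ≠ 0 := by
  classical
  intro h0
  simpa [h] using congrArg (eval (Pi.single i 1)) h0

open Classical in
def divDiff (d : MvPolynomial σ R) (φ : MvPolynomial σ R →ₐ[R] MvPolynomial σ R)
    (f : MvPolynomial σ R) : MvPolynomial σ R :=
  if h : d ∣ f - φ f then h.choose else 0

variable {d f g : MvPolynomial σ R} {φ : MvPolynomial σ R →ₐ[R] MvPolynomial σ R}

theorem mul_divDiff (h : d ∣ f - φ f) : d * divDiff d φ f = f - φ f := by
  rw [divDiff, dif_pos h]
  exact h.choose_spec.symm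

variable [IsDomain R]

theorem divDiff_eq_of_mul_eq (hd : d ≠ 0) (h : d * g = f - φ f) : divDiff d φ f = g :=
  mul_left_cancel₀ hd (by rw [mul_divDiff ⟨g, h.symm⟩, h])

theorem map_divDiff {ψ φ' : MvPolynomial σ R →ₐ[R] MvPolynomial σ R} {d' : MvPolynomial σ R}
    (hψ : ψ.comp φ = φ'.comp ψ) (hd : ψ d = d') (hd' : d' ≠ 0) (h : d ∣ f - φ f) :
    ψ (divDiff d φ f) = divDiff d' φ' (ψ f) := by
  refine (divDiff_eq_of_mul_eq hd' ?_).symm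
  rw [← hd, ← map_mul, mul_divDiff h, map_sub, ← AlgHom.comp_apply, hψ, AlgHom.comp_apply]

theorem divDiff_neg (hd : d ≠ 0) (h : d ∣ f - φ f) : divDiff (-d) φ f = -divDiff d φ f :=
  divDiff_eq_of_mul_eq (neg_ne_zero.2 hd) (by rw [neg_mul_neg, mul_divDiff h])

theorem divDiff_mul (hd : d ≠ 0) (hf : d ∣ f - φ f) (hg : d ∣ g - φ g) :
    divDiff d φ (f * g) = f * divDiff d φ g + divDiff d φ f * φ g := by
  refine divDiff_eq_of_mul_eq hd ?_
  rw [map_mul]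
  linear_combination f * mul_divDiff hg + φ g * mul_divDiff hf

def divDiffₗ (d : MvPolynomial σ R) (φ : MvPolynomial σ R →ₐ[R] MvPolynomial σ R)
    (hd : d ≠ 0) (h : ∀ f, d ∣ f - φ f) : MvPolynomial σ R →ₗ[R] MvPolynomial σ R where
  toFun := divDiff d φ
  map_add' f g := divDiff_eq_of_mul_eq hd <| by
    rw [map_add]
    linear_combination mul_divDiff (h f) + mul_divDiff (h g)
  map_smul' c f := divDiff_eq_of_mul_eq hd <| by
    rw [RingHom.id_apply, mul_smul_comm, mul_divDiff (h f), map_smul, smul_sub]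

@[simp] theorem divDiffₗ_apply (hd : d ≠ 0) (h : ∀ f, d ∣ f - φ f) :
    divDiffₗ d φ hd h f = divDiff d φ f := rfl

end MvPolynomial

namespace Dunkl

open MvPolynomial TensorProduct

section Substitutions

variable {σ R : Type*} [CommRing R] [DecidableEq σ]

def tau (i : σ) : MvPolynomial σ R →ₐ[R] MvPolynomial σ R :=
  aeval fun j => if j = i then -X j else X j

def sbar (k i : σ) : MvPolynomial σ R →ₐ[R] MvPolynomial σ R :=
  aeval fun j => if j = i then -X k else if j = k then -X i else X j

@[simp] theorem tau_X (i j : σ) : tau i (X j : MvPolynomial σ R) = if j = i then -X j else X j :=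
  aeval_X _ _

@[simp] theorem sbar_X (k i j : σ) :
    sbar k i (X j : MvPolynomial σ R) = if j = i then -X k else if j = k then -X i else X j :=
  aeval_X _ _

theorem tau_tau (i : σ) (f : MvPolynomial σ R) : tau i (tau i f) = f := by
  suffices (tau i).comp (tau i) = AlgHom.id R (MvPolynomial σ R) from congr($this f)
  ext l : 1
  by_cases l = i <;> simp_all

theorem tau_comm (i j : σ) (f : MvPolynomial σ R) : tau i (tau j f) = tau j (tau i f) := by
  suffices (tau i).comp (tau j) = ((tau j).comp (tau i) : MvPolynomial σ R →ₐ[R] _) from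
    congr($this f)
  ext l : 1
  by_cases l = i <;> by_cases l = j <;> simp_all

theorem sbar_comm (k i : σ) : (sbar k i : MvPolynomial σ R →ₐ[R] _) = sbar i k := by
  ext l : 1
  by_cases l = i <;> by_cases l = k <;> simp_all

theorem rename_tau (w : Equiv.Perm σ) (i : σ) (f : MvPolynomial σ R) :
    rename w (tau i f) = tau (w i) (rename w f) := by
  suffices (rename w).comp (tau i) = ((tau (w i)).comp (rename w) : MvPolynomial σ R →ₐ[R] _) from
    congr($this f)
  ext l : 1
  by_cases l = i <;> simp_all

theorem rename_comp_rename_swap (w : Equiv.Perm σ) (k i : σ) :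
    (rename w).comp (rename (Equiv.swap k i)) =
      ((rename (Equiv.swap (w k) (w i))).comp (rename w) : MvPolynomial σ R →ₐ[R] _) := by
  ext l : 1
  simp [Equiv.swap_apply_apply]

theorem rename_comp_sbar (w : Equiv.Perm σ) (k i : σ) :
    (rename w).comp (sbar k i) =
      ((sbar (w k) (w i)).comp (rename w) : MvPolynomial σ R →ₐ[R] _) := by
  ext l : 1
  by_cases l = i <;> by_cases l = k <;> simp_all

theorem dvd_sub_rename_swap (k i : σ) (f : MvPolynomial σ R) :
    X i - X k ∣ f - rename (Equiv.swap k i) f := by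
  refine dvd_sub_map_of_dvd_X_sub (fun j => ?_) f
  rw [rename_X]
  by_cases hji : j = i
  · simp [hji]
  by_cases hjk : j = k
  · subst hjk
    simp [dvd_sub_comm]
  · simp [Equiv.swap_apply_of_ne_of_ne hjk hji]

theorem dvd_sub_sbar (k i : σ) (f : MvPolynomial σ R) : X i + X k ∣ f - sbar k i f := by
  refine dvd_sub_map_of_dvd_X_sub (fun j => ?_) f
  by_cases hji : j = i
  · simp [hji]
  by_cases hjk : j = k
  · subst hjk
    simp [hji, add_comm]
  · simp [hji, hjk]

variable {k i j : σ}

theorem tau_comp_rename_swap_of_ne (hji : j ≠ i) (hjk : j ≠ k) :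
    (tau j).comp (rename (Equiv.swap k i)) =
      ((rename (Equiv.swap k i)).comp (tau j) : MvPolynomial σ R →ₐ[R] _) := by
  ext l : 1
  by_cases l = i <;> by_cases l = k <;> by_cases l = j <;>
    simp_all [Equiv.swap_apply_def, Ne.symm hji, Ne.symm hjk]

theorem tau_comp_sbar_of_ne (hji : j ≠ i) (hjk : j ≠ k) :
    (tau j).comp (sbar k i) = ((sbar k i).comp (tau j) : MvPolynomial σ R →ₐ[R] _) := by
  ext l : 1
  by_cases l = i <;> by_cases l = k <;> by_cases l = j <;>
    simp_all [Ne.symm hji, Ne.symm hjk]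

theorem tau_comp_rename_swap (hki : k ≠ i) (hj : j = i ∨ j = k) :
    (tau j).comp (rename (Equiv.swap k i)) =
      ((sbar k i).comp (tau j) : MvPolynomial σ R →ₐ[R] _) := by
  ext l : 1
  rcases hj with hj | hj <;> by_cases l = i <;> by_cases l = k <;>
    simp_all [Equiv.swap_apply_def, Ne.symm hki]

theorem tau_comp_sbar (hki : k ≠ i) (hj : j = i ∨ j = k) :
    (tau j).comp (sbar k i) =
      ((rename (Equiv.swap k i)).comp (tau j) : MvPolynomial σ R →ₐ[R] _) := by
  ext l : 1
  rcases hj with hj | hj <;> by_cases l = i <;> by_cases l = k <;>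
    simp_all [Equiv.swap_apply_def, Ne.symm hki]

theorem sbar_eq_tau_tau_rename_swap (hki : k ≠ i) (f : MvPolynomial σ R) :
    sbar k i f = tau k (tau i (rename (Equiv.swap k i) f)) := by
  suffices sbar k i = (tau k).comp ((tau i).comp (rename (Equiv.swap k i)) :
      MvPolynomial σ R →ₐ[R] _) from congr($this f)
  ext l : 1
  by_cases l = i <;> by_cases l = k <;> simp_all [Equiv.swap_apply_def, Ne.symm hki]

end Substitutions

section DividedDifferences

variable {σ R : Type*} [CommRing R] [IsDomain R] [DecidableEq σ] {k i : σ}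

def divDiffSwap (k i : σ) : MvPolynomial σ R →ₗ[R] MvPolynomial σ R :=
  if h : k = i then 0
  else divDiffₗ _ _ (X_sub_X_ne_zero h) (dvd_sub_rename_swap k i)

def divDiffBar (k i : σ) : MvPolynomial σ R →ₗ[R] MvPolynomial σ R :=
  if h : k = i then 0
  else divDiffₗ _ _ (X_add_X_ne_zero h) (dvd_sub_sbar k i)

theorem divDiffSwap_apply (h : k ≠ i) (f : MvPolynomial σ R) :
    divDiffSwap k i f = divDiff (X i - X k) (rename (Equiv.swap k i)) f := by
  simp [divDiffSwap, h]

theorem divDiffBar_apply (h : k ≠ i) (f : MvPolynomial σ R) :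
    divDiffBar k i f = divDiff (X i + X k) (sbar k i) f := by
  simp [divDiffBar, h]

theorem mul_divDiffSwap (h : k ≠ i) (f : MvPolynomial σ R) :
    (X i - X k) * divDiffSwap k i f = f - rename (Equiv.swap k i) f := by
  rw [divDiffSwap_apply h, mul_divDiff (dvd_sub_rename_swap k i f)]

theorem mul_divDiffBar (h : k ≠ i) (f : MvPolynomial σ R) :
    (X i + X k) * divDiffBar k i f = f - sbar k i f := by
  rw [divDiffBar_apply h, mul_divDiff (dvd_sub_sbar k i f)]

theorem divDiffSwap_eq_of_mul_eq (h : k ≠ i) {f g : MvPolynomial σ R}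
    (hg : (X i - X k) * g = f - rename (Equiv.swap k i) f) : divDiffSwap k i f = g := by
  rw [divDiffSwap_apply h, divDiff_eq_of_mul_eq (X_sub_X_ne_zero h) hg]

theorem divDiffBar_eq_of_mul_eq (h : k ≠ i) {f g : MvPolynomial σ R}
    (hg : (X i + X k) * g = f - sbar k i f) : divDiffBar k i f = g := by
  rw [divDiffBar_apply h, divDiff_eq_of_mul_eq (X_add_X_ne_zero h) hg]

theorem divDiffSwap_one (h : k ≠ i) : divDiffSwap k i (1 : MvPolynomial σ R) = 0 :=
  divDiffSwap_eq_of_mul_eq h (by simp)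

theorem divDiffBar_one (h : k ≠ i) : divDiffBar k i (1 : MvPolynomial σ R) = 0 :=
  divDiffBar_eq_of_mul_eq h (by simp)

theorem divDiffSwap_X (h : k ≠ i) (j : σ) :
    divDiffSwap k i (X j : MvPolynomial σ R) = if j = i then 1 else if j = k then -1 else 0 := by
  refine divDiffSwap_eq_of_mul_eq h ?_
  rw [rename_X]
  by_cases hji : j = i
  · simp [hji]
  by_cases hjk : j = k
  · subst hjk
    simp [hji]
  · simp [hji, hjk, Equiv.swap_apply_of_ne_of_ne hjk hji]

theorem divDiffBar_X (h : k ≠ i) (j : σ) :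
    divDiffBar k i (X j : MvPolynomial σ R) = if j = i ∨ j = k then 1 else 0 := by
  refine divDiffBar_eq_of_mul_eq h ?_
  by_cases hji : j = i
  · simp [hji]
  by_cases hjk : j = k
  · subst hjk
    simp [hji, add_comm]
  · simp [hji, hjk]

theorem divDiffSwap_mul (h : k ≠ i) (f g : MvPolynomial σ R) :
    divDiffSwap k i (f * g) =
      f * divDiffSwap k i g + divDiffSwap k i f * rename (Equiv.swap k i) g := by
  simp only [divDiffSwap_apply h]
  exact divDiff_mul (X_sub_X_ne_zero h) (dvd_sub_rename_swap k i f) (dvd_sub_rename_swap k i g)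

theorem divDiffBar_mul (h : k ≠ i) (f g : MvPolynomial σ R) :
    divDiffBar k i (f * g) = f * divDiffBar k i g + divDiffBar k i f * sbar k i g := by
  simp only [divDiffBar_apply h]
  exact divDiff_mul (X_add_X_ne_zero h) (dvd_sub_sbar k i f) (dvd_sub_sbar k i g)

theorem rename_divDiffSwap (h : k ≠ i) (w : Equiv.Perm σ) (f : MvPolynomial σ R) :
    rename w (divDiffSwap k i f) = divDiffSwap (w k) (w i) (rename w f) := by
  have h' : w k ≠ w i := w.injective.ne h
  rw [divDiffSwap_apply h, divDiffSwap_apply h', map_divDiff (rename_comp_rename_swap w k i)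
    (by simp) (X_sub_X_ne_zero h') (dvd_sub_rename_swap k i f)]

theorem rename_divDiffBar (h : k ≠ i) (w : Equiv.Perm σ) (f : MvPolynomial σ R) :
    rename w (divDiffBar k i f) = divDiffBar (w k) (w i) (rename w f) := by
  have h' : w k ≠ w i := w.injective.ne h
  rw [divDiffBar_apply h, divDiffBar_apply h', map_divDiff (rename_comp_sbar w k i)
    (by simp) (X_add_X_ne_zero h') (dvd_sub_sbar k i f)]

theorem tau_divDiffSwap_of_ne (h : k ≠ i) {j : σ} (hji : j ≠ i) (hjk : j ≠ k)
    (f : MvPolynomial σ R) : tau j (divDiffSwap k i f) = divDiffSwap k i (tau j f) := by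
  rw [divDiffSwap_apply h, divDiffSwap_apply h, map_divDiff (tau_comp_rename_swap_of_ne hji hjk)
    (by simp [Ne.symm hji, Ne.symm hjk]) (X_sub_X_ne_zero h) (dvd_sub_rename_swap k i f)]

theorem tau_divDiffBar_of_ne (h : k ≠ i) {j : σ} (hji : j ≠ i) (hjk : j ≠ k)
    (f : MvPolynomial σ R) : tau j (divDiffBar k i f) = divDiffBar k i (tau j f) := by
  rw [divDiffBar_apply h, divDiffBar_apply h, map_divDiff (tau_comp_sbar_of_ne hji hjk)
    (by simp [Ne.symm hji, Ne.symm hjk]) (X_add_X_ne_zero h) (dvd_sub_sbar k i f)]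

theorem tau_right_divDiffSwap (h : k ≠ i) (f : MvPolynomial σ R) :
    tau i (divDiffSwap k i f) = -divDiffBar k i (tau i f) := by
  rw [divDiffSwap_apply h, divDiffBar_apply h, ← divDiff_neg (X_add_X_ne_zero h)
    (dvd_sub_sbar k i _), map_divDiff (tau_comp_rename_swap h (.inl rfl)) (by simp [h]; ring)
    (neg_ne_zero.2 (X_add_X_ne_zero h)) (dvd_sub_rename_swap k i f)]

theorem tau_right_divDiffBar (h : k ≠ i) (f : MvPolynomial σ R) :
    tau i (divDiffBar k i f) = -divDiffSwap k i (tau i f) := by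
  rw [divDiffSwap_apply h, divDiffBar_apply h, ← divDiff_neg (X_sub_X_ne_zero h)
    (dvd_sub_rename_swap k i _), map_divDiff (tau_comp_sbar h (.inl rfl)) (by simp [h]; ring)
    (neg_ne_zero.2 (X_sub_X_ne_zero h)) (dvd_sub_sbar k i f)]

theorem tau_left_divDiffSwap (h : k ≠ i) (f : MvPolynomial σ R) :
    tau k (divDiffSwap k i f) = divDiffBar k i (tau k f) := by
  rw [divDiffSwap_apply h, divDiffBar_apply h, map_divDiff (tau_comp_rename_swap h (.inr rfl))
    (by simp [Ne.symm h]) (X_add_X_ne_zero h) (dvd_sub_rename_swap k i f)]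

theorem tau_left_divDiffBar (h : k ≠ i) (f : MvPolynomial σ R) :
    tau k (divDiffBar k i f) = divDiffSwap k i (tau k f) := by
  rw [divDiffSwap_apply h, divDiffBar_apply h, map_divDiff (tau_comp_sbar h (.inr rfl))
    (by simp [Ne.symm h]; ring) (X_sub_X_ne_zero h) (dvd_sub_sbar k i f)]

end DividedDifferences

section SmashProduct

theorem kC_mul_self (i : Fin n) : kC act i * kC act i = 1 := by
  simpa only [kC, map_mul, map_one] using RingQuot.mkAlgHom_rel ℂ (KRel.cc (act := act) i)

theorem kC_mul_kC_of_ne {i j : Fin n} (h : i ≠ j) :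
    kC act i * kC act j = -(kC act j * kC act i) := by
  simpa only [kC, map_mul, map_neg] using RingQuot.mkAlgHom_rel ℂ (KRel.canti (act := act) h)

theorem kG_one : kG act (1 : G) = 1 := by
  simpa only [kG, map_one] using RingQuot.mkAlgHom_rel ℂ (KRel.gone (act := act))

theorem kG_mul (w w' : G) : kG act w * kG act w' = kG act (w * w') := by
  simpa only [kG, map_mul] using RingQuot.mkAlgHom_rel ℂ (KRel.gmul (act := act) w w')

local notation "𝔠" => kC (actA n)
local notation "𝔤" => kG (actA n)

theorem kG_mul_kC (w : Equiv.Perm (Fin n)) (i : Fin n) : 𝔤 w * 𝔠 i = 𝔠 (w i) * 𝔤 w := by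
  simpa only [kG, kC, map_mul, map_smul, actA, one_smul] using
    RingQuot.mkAlgHom_rel ℂ (KRel.gc (act := actA n) w i)

theorem kG_mul_kG_swap (w : Equiv.Perm (Fin n)) (k i : Fin n) :
    𝔤 w * 𝔤 (Equiv.swap k i) = 𝔤 (Equiv.swap (w k) (w i)) * 𝔤 w := by
  rw [kG_mul, kG_mul, Equiv.swap_apply_apply, inv_mul_cancel_right]

def cliffSwap (k i : Fin n) : Smash n (Equiv.Perm (Fin n)) (actA n) :=
  𝔠 k * 𝔠 i * 𝔤 (Equiv.swap k i)

theorem kG_mul_cliffSwap (w : Equiv.Perm (Fin n)) (k i : Fin n) :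
    𝔤 w * cliffSwap k i = cliffSwap (w k) (w i) * 𝔤 w := by
  simp only [cliffSwap, mul_assoc, ← kG_mul_kG_swap]
  rw [← mul_assoc (𝔤 w), kG_mul_kC, mul_assoc, ← mul_assoc (𝔤 w), kG_mul_kC, mul_assoc]

/- `rw [neg_mul]` fails on the smash product: its multiplication is found through
`RingQuot`'s semiring instance, the one in `neg_mul` through its ring instance. -/
theorem smash_neg_mul (a b : Smash n (Equiv.Perm (Fin n)) (actA n)) : -a * b = -(a * b) :=
  neg_mul a b

theorem smash_mul_neg (a b : Smash n (Equiv.Perm (Fin n)) (actA n)) : a * -b = -(a * b) :=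
  mul_neg a b

variable {k i : Fin n}

theorem cliffSwap_comm (h : k ≠ i) : cliffSwap i k = -cliffSwap k i := by
  rw [cliffSwap, cliffSwap, kC_mul_kC_of_ne h.symm, Equiv.swap_comm, smash_neg_mul]

theorem cliffSwap_mul_kC_right (h : k ≠ i) : cliffSwap k i * 𝔠 i = -(𝔠 i * 𝔤 (Equiv.swap k i)) := by
  rw [cliffSwap, mul_assoc, kG_mul_kC, Equiv.swap_apply_right, mul_assoc, ← mul_assoc (𝔠 i),
    kC_mul_kC_of_ne h.symm, smash_neg_mul, smash_mul_neg, ← mul_assoc, ← mul_assoc, kC_mul_self,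
    one_mul]

theorem kC_mul_cliffSwap_right (h : k ≠ i) : 𝔠 i * cliffSwap k i = -(𝔠 k * 𝔤 (Equiv.swap k i)) := by
  rw [cliffSwap, ← mul_assoc, ← mul_assoc, kC_mul_kC_of_ne h.symm, smash_neg_mul, smash_neg_mul,
    mul_assoc (𝔠 k), kC_mul_self, mul_one]

theorem cliffSwap_mul_kC_left : cliffSwap k i * 𝔠 k = 𝔠 k * 𝔤 (Equiv.swap k i) := by
  rw [cliffSwap, mul_assoc, kG_mul_kC, Equiv.swap_apply_left, ← mul_assoc,
    mul_assoc (𝔠 k), kC_mul_self, mul_one]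

theorem kC_mul_cliffSwap_left : 𝔠 k * cliffSwap k i = 𝔠 i * 𝔤 (Equiv.swap k i) := by
  rw [cliffSwap, ← mul_assoc, ← mul_assoc, kC_mul_self, one_mul]

theorem cliffSwap_mul_kC_of_ne {j : Fin n} (hji : j ≠ i) (hjk : j ≠ k) :
    cliffSwap k i * 𝔠 j = 𝔠 j * cliffSwap k i := by
  rw [cliffSwap, mul_assoc, kG_mul_kC, Equiv.swap_apply_of_ne_of_ne hjk hji, ← mul_assoc,
    mul_assoc (𝔠 k), kC_mul_kC_of_ne hji.symm, smash_mul_neg, ← mul_assoc,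
    kC_mul_kC_of_ne hjk.symm, smash_neg_mul, smash_neg_mul, smash_neg_mul, neg_neg, mul_assoc,
    mul_assoc, mul_assoc]

end SmashProduct

section CommutatorAlgebra

attribute [local instance] LieRing.ofAssociativeRing

variable {A : Type*} [Ring A]

theorem commute_lie_of_lie_lie_eq {a b x : A} (h : ⁅a, ⁅b, x⁆⁆ = ⁅b, ⁅a, x⁆⁆) :
    Commute ⁅a, b⁆ x := by
  rw [Commute, SemiconjBy, ← sub_eq_zero]
  calc ⁅a, b⁆ * x - x * ⁅a, b⁆ = ⁅a, ⁅b, x⁆⁆ - ⁅b, ⁅a, x⁆⁆ := by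
        simp only [Ring.lie_def]
        noncomm_ring
    _ = 0 := by rw [h, sub_self]

variable [Algebra ℂ A] (u : ℂ)

/- The right-hand side `RA n u j i` of `[y_j, x_i]`, with the reflection terms
`(1 + c_k c_i) s_{ki}` replaced by `B k i`. The ring-level computations are done in an abstract
ring `A` because on `Module.End ℂ (ℂ[x] ⊗ M)` the ring lemmas do not rewrite: the additive
structure of `ℂ[x] ⊗ M` is reached along instance paths that agree only up to unfolding. -/
def dunklCommutator (B : Fin n → Fin n → A) (j i : Fin n) : A :=
  if j = i then -(u • ∑ k ∈ Finset.univ.erase i, B k i) else u • B j i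

theorem lie_neg_smul_sum_eq_dunklCommutator {T B : Fin n → Fin n → A} {x : Fin n → A}
    (hT : ∀ k j i, k ≠ j → ⁅T k j, x i⁆ = if i = j then B k j else if i = k then -B j k else 0)
    (j i : Fin n) : ⁅-u • ∑ k ∈ Finset.univ.erase j, T k j, x i⁆ = dunklCommutator u B j i := by
  have hsum : ⁅-u • ∑ k ∈ Finset.univ.erase j, T k j, x i⁆ =
      -u • ∑ k ∈ Finset.univ.erase j, ⁅T k j, x i⁆ := by
    simp only [Ring.lie_def, smul_mul_assoc, mul_smul_comm, Finset.sum_mul, Finset.mul_sum,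
      ← smul_sub, ← Finset.sum_sub_distrib]
  rw [hsum, Finset.sum_congr rfl fun k hk => hT k j i (Finset.ne_of_mem_erase hk),
    dunklCommutator]
  by_cases hij : i = j
  · subst hij
    simp
  · simp [hij, Ne.symm hij, Finset.sum_ite_eq]

theorem lie_dunklCommutator_comm {y : Fin n → A} {B : Fin n → Fin n → A}
    (hyB : ∀ a j k, y a * B j k = B j k * y (Equiv.swap j k a)) {i j : Fin n} (hij : i ≠ j)
    (k : Fin n) : ⁅y i, dunklCommutator u B j k⁆ = ⁅y j, dunklCommutator u B i k⁆ := by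
  have hlie : ∀ a j k, ⁅y a, B j k⁆ = B j k * (y (Equiv.swap j k a) - y a) := fun a j k => by
    rw [Ring.lie_def, hyB, mul_sub]
  have hself : ∀ {i j}, i ≠ j → ⁅y i, dunklCommutator u B j i⁆ = ⁅y j, dunklCommutator u B i i⁆ :=
    fun {i j} hij => by
    rw [dunklCommutator, if_neg hij.symm, dunklCommutator, if_pos rfl, lie_neg, lie_smul, lie_smul,
      lie_sum, Finset.sum_eq_single_of_mem j (by simp [hij.symm]) fun l _ hlj => by
        rw [hlie, Equiv.swap_apply_of_ne_of_ne hlj.symm hij.symm, sub_self, mul_zero],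
      hlie, hlie, Equiv.swap_apply_left, Equiv.swap_apply_right, ← neg_sub (y j), mul_neg,
      smul_neg, neg_neg]
  rcases eq_or_ne k i with rfl | hki
  · exact hself hij
  rcases eq_or_ne k j with rfl | hkj
  · exact (hself hij.symm).symm
  rw [dunklCommutator, if_neg hkj.symm, dunklCommutator, if_neg hki.symm, lie_smul, lie_smul, hlie,
    hlie, Equiv.swap_apply_of_ne_of_ne hij (Ne.symm hki),
    Equiv.swap_apply_of_ne_of_ne hij.symm (Ne.symm hkj), sub_self, sub_self, mul_zero, mul_zero]

end CommutatorAlgebra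

section Operators

variable (u : ℂ) (M : Type) [AddCommGroup M] [Module ℂ M]

local notation "𝔠" => kC (actA n)
local notation "𝔤" => kG (actA n)
local notation "𝒫" => MvPolynomial (Fin n) ℂ
local notation "𝔪" => Algebra.lsmul ℂ ℂ M

def xOp (i : Fin n) : Module.End ℂ (𝒫 ⊗[ℂ] M) :=
  (LinearMap.mulLeft ℂ (X i)).rTensor M

@[simp] theorem xOp_tmul (i : Fin n) (f : 𝒫) (m : M) : xOp M i (f ⊗ₜ m) = (X i * f) ⊗ₜ m := rfl

theorem commute_xOp (i j : Fin n) : Commute (xOp M i) (xOp M j) :=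
  TensorProduct.ext' fun f m => by simp [mul_left_comm (X i)]

variable [Module (Smash n (Equiv.Perm (Fin n)) (actA n)) M]
  [IsScalarTower ℂ (Smash n (Equiv.Perm (Fin n)) (actA n)) M]

def wOp (w : Equiv.Perm (Fin n)) : Module.End ℂ (𝒫 ⊗[ℂ] M) :=
  map (rename w).toLinearMap (𝔪 (𝔤 w))

def cOp (i : Fin n) : Module.End ℂ (𝒫 ⊗[ℂ] M) :=
  map (tau i).toLinearMap (𝔪 (𝔠 i))

def dunklTerm (k i : Fin n) : Module.End ℂ (𝒫 ⊗[ℂ] M) :=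
  map (divDiffSwap k i) (𝔪 (𝔤 (Equiv.swap k i))) +
    map (divDiffBar k i) (𝔪 (cliffSwap k i))

def yOp (i : Fin n) : Module.End ℂ (𝒫 ⊗[ℂ] M) :=
  -u • ∑ k ∈ Finset.univ.erase i, dunklTerm M k i

def reflOp (k i : Fin n) : Module.End ℂ (𝒫 ⊗[ℂ] M) :=
  (1 + cOp M k * cOp M i) * wOp M (Equiv.swap k i)

variable {M}

@[simp] theorem wOp_tmul (w : Equiv.Perm (Fin n)) (f : 𝒫) (m : M) :
    wOp M w (f ⊗ₜ m) = rename w f ⊗ₜ (𝔤 w • m) := rfl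

@[simp] theorem cOp_tmul (i : Fin n) (f : 𝒫) (m : M) :
    cOp M i (f ⊗ₜ m) = tau i f ⊗ₜ (𝔠 i • m) := rfl

@[simp] theorem dunklTerm_tmul (k i : Fin n) (f : 𝒫) (m : M) :
    dunklTerm M k i (f ⊗ₜ m) = divDiffSwap k i f ⊗ₜ (𝔤 (Equiv.swap k i) • m) +
      divDiffBar k i f ⊗ₜ ((cliffSwap k i) • m) := rfl

theorem yOp_tmul (i : Fin n) (f : 𝒫) (m : M) :
    yOp u M i (f ⊗ₜ m) = -(u • ∑ k ∈ Finset.univ.erase i, dunklTerm M k i (f ⊗ₜ m)) := by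
  simp only [yOp, LinearMap.smul_apply, LinearMap.sum_apply]
  exact neg_smul _ _

theorem reflOp_tmul {k i : Fin n} (h : k ≠ i) (f : 𝒫) (m : M) :
    reflOp M k i (f ⊗ₜ m) = rename (Equiv.swap k i) f ⊗ₜ (𝔤 (Equiv.swap k i) • m) +
      sbar k i f ⊗ₜ ((cliffSwap k i) • m) := by
  simp [reflOp, sbar_eq_tau_tau_rename_swap h, cliffSwap, mul_smul]

theorem cOp_mul_self (i : Fin n) : cOp M i * cOp M i = 1 :=
  TensorProduct.ext' fun f m => by simp [tau_tau, smul_smul, kC_mul_self]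

theorem cOp_mul_cOp_of_ne {i j : Fin n} (h : i ≠ j) : cOp M i * cOp M j = -(cOp M j * cOp M i) :=
  TensorProduct.ext' fun f m => by
    simp [smul_smul, kC_mul_kC_of_ne h, tau_comm i j f, tmul_neg]

theorem xOp_mul_cOp_self (i : Fin n) : xOp M i * cOp M i = -(cOp M i * xOp M i) :=
  TensorProduct.ext' fun f m => by simp [← neg_tmul]

theorem xOp_mul_cOp_of_ne {i j : Fin n} (h : i ≠ j) : xOp M i * cOp M j = cOp M j * xOp M i :=
  TensorProduct.ext' fun f m => by simp [h]

theorem wOp_one : wOp M (1 : Equiv.Perm (Fin n)) = 1 :=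
  TensorProduct.ext' fun f m => by simp [kG_one]

theorem wOp_mul (w w' : Equiv.Perm (Fin n)) : wOp M w * wOp M w' = wOp M (w * w') :=
  TensorProduct.ext' fun f m => by simp [rename_rename, smul_smul, kG_mul]

theorem wOp_mul_xOp (w : Equiv.Perm (Fin n)) (i : Fin n) :
    wOp M w * xOp M i = xOp M (w i) * wOp M w :=
  TensorProduct.ext' fun f m => by simp

theorem wOp_mul_cOp (w : Equiv.Perm (Fin n)) (i : Fin n) :
    wOp M w * cOp M i = cOp M (w i) * wOp M w :=
  TensorProduct.ext' fun f m => by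
    simp [smul_smul, kG_mul_kC, rename_tau]

theorem wOp_mul_dunklTerm {k i : Fin n} (h : k ≠ i) (w : Equiv.Perm (Fin n)) :
    wOp M w * dunklTerm M k i = dunklTerm M (w k) (w i) * wOp M w :=
  TensorProduct.ext' fun f m => by
    simp [smul_smul, rename_divDiffSwap h, rename_divDiffBar h, kG_mul_kG_swap, kG_mul_cliffSwap]

theorem wOp_mul_yOp (w : Equiv.Perm (Fin n)) (i : Fin n) :
    wOp M w * yOp u M i = yOp u M (w i) * wOp M w := by
  simp only [yOp, mul_smul_comm, smul_mul_assoc, Finset.mul_sum, Finset.sum_mul]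
  congr 1
  exact Finset.sum_equiv w (by simp) fun k hk => wOp_mul_dunklTerm (Finset.ne_of_mem_erase hk) w

theorem dunklTerm_mul_cOp {k i : Fin n} (h : k ≠ i) (j : Fin n) :
    dunklTerm M k i * cOp M j = cOp M j * dunklTerm M k i := by
  refine TensorProduct.ext' fun f m => ?_
  simp only [Module.End.mul_apply, cOp_tmul, dunklTerm_tmul, map_add, smul_smul, kG_mul_kC]
  by_cases hji : j = i
  · subst hji
    rw [tau_right_divDiffSwap h, tau_right_divDiffBar h, cliffSwap_mul_kC_right h,
      kC_mul_cliffSwap_right h, Equiv.swap_apply_right]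
    simp only [neg_smul, tmul_neg, neg_tmul, neg_neg]
    abel
  by_cases hjk : j = k
  · subst hjk
    rw [tau_left_divDiffSwap h, tau_left_divDiffBar h, cliffSwap_mul_kC_left,
      kC_mul_cliffSwap_left, Equiv.swap_apply_left, add_comm]
  · rw [tau_divDiffSwap_of_ne h hji hjk, tau_divDiffBar_of_ne h hji hjk,
      cliffSwap_mul_kC_of_ne hji hjk, Equiv.swap_apply_of_ne_of_ne hjk hji]

theorem commute_yOp_cOp (i j : Fin n) : Commute (yOp u M i) (cOp M j) := by
  refine ((Commute.sum_left _ _ _ fun k hk => ?_).smul_left (-u))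
  exact dunklTerm_mul_cOp (Finset.ne_of_mem_erase hk) j

theorem lie_dunklTerm_xOp {k i : Fin n} (h : k ≠ i) (j : Fin n) :
    ⁅dunklTerm M k i, xOp M j⁆ =
      if j = i then reflOp M k i else if j = k then -reflOp M i k else 0 := by
  refine TensorProduct.ext' fun f m => ?_
  have leibniz : ⁅dunklTerm M k i, xOp M j⁆ (f ⊗ₜ m) =
      (divDiffSwap k i (X j) * rename (Equiv.swap k i) f) ⊗ₜ (𝔤 (Equiv.swap k i) • m) +
        (divDiffBar k i (X j) * sbar k i f) ⊗ₜ (cliffSwap k i • m) := by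
    simp only [Ring.lie_def, LinearMap.sub_apply, Module.End.mul_apply, xOp_tmul,
      dunklTerm_tmul, map_add, divDiffSwap_mul h, divDiffBar_mul h, add_tmul]
    abel
  rw [leibniz, divDiffSwap_X h, divDiffBar_X h]
  by_cases hji : j = i
  · simp [hji, reflOp_tmul h]
  by_cases hjk : j = k
  · simp [hjk, h, reflOp_tmul h.symm, Equiv.swap_comm i k, sbar_comm i k, cliffSwap_comm h,
      neg_tmul, tmul_neg, add_comm]
  · simp [hji, hjk]

theorem lie_yOp_xOp (j i : Fin n) :
    ⁅yOp u M j, xOp M i⁆ = dunklCommutator u (reflOp M) j i :=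
  lie_neg_smul_sum_eq_dunklCommutator u (fun _ _ _ h => lie_dunklTerm_xOp h _) j i

theorem yOp_mul_reflOp (a j k : Fin n) :
    yOp u M a * reflOp M j k = reflOp M j k * yOp u M (Equiv.swap j k a) := by
  have hc : Commute (yOp u M a) (1 + cOp M j * cOp M k) :=
    (Commute.one_right _).add_right ((commute_yOp_cOp u a j).mul_right (commute_yOp_cOp u a k))
  have hw := wOp_mul_yOp u (M := M) (Equiv.swap j k) (Equiv.swap j k a)
  rw [Equiv.swap_apply_self] at hw
  rw [reflOp, ← mul_assoc, hc.eq, mul_assoc, mul_assoc, ← hw]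

theorem yOp_one_tmul (i : Fin n) (m : M) : yOp u M i (1 ⊗ₜ m) = 0 := by
  rw [yOp_tmul, Finset.sum_eq_zero fun k hk => ?_, smul_zero, neg_zero]
  simp [divDiffSwap_one (Finset.ne_of_mem_erase hk), divDiffBar_one (Finset.ne_of_mem_erase hk)]

theorem commute_yOp (i j : Fin n) : Commute (yOp u M i) (yOp u M j) := by
  rcases eq_or_ne i j with rfl | hij
  · exact Commute.refl _
  have hX : ∀ k, Commute ⁅yOp u M i, yOp u M j⁆ (xOp M k) := fun k =>
    commute_lie_of_lie_lie_eq <| by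
      rw [lie_yOp_xOp, lie_yOp_xOp]
      exact lie_dunklCommutator_comm u (yOp_mul_reflOp u) hij k
  have h1 : ∀ m : M, ⁅yOp u M i, yOp u M j⁆ (1 ⊗ₜ m) = 0 := fun m => by
    simp [Ring.lie_def, yOp_one_tmul]
  exact sub_eq_zero.mp (eq_zero_of_commute_rTensor_mulLeft_X h1 hX)

end Operators

section Representation

variable (u : ℂ) (M : Type) [AddCommGroup M] [Module ℂ M]
  [Module (Smash n (Equiv.Perm (Fin n)) (actA n)) M]
  [IsScalarTower ℂ (Smash n (Equiv.Perm (Fin n)) (actA n)) M]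

def generatorOp : HGen n (Equiv.Perm (Fin n)) → Module.End ℂ (MvPolynomial (Fin n) ℂ ⊗[ℂ] M)
  | .x i => xOp M i
  | .y i => yOp u M i
  | .c i => cOp M i
  | .g w => wOp M w

def freeRep : HF n (Equiv.Perm (Fin n)) →ₐ[ℂ] Module.End ℂ (MvPolynomial (Fin n) ℂ ⊗[ℂ] M) :=
  FreeAlgebra.lift ℂ (generatorOp u M)

@[simp] theorem freeRep_hX (i : Fin n) : freeRep u M (hX i) = xOp M i := by
  simp [freeRep, hX, generatorOp]

@[simp] theorem freeRep_hY (i : Fin n) : freeRep u M (hY i) = yOp u M i := by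
  simp [freeRep, hY, generatorOp]

@[simp] theorem freeRep_hC (i : Fin n) : freeRep u M (hC i) = cOp M i := by
  simp [freeRep, hC, generatorOp]

@[simp] theorem freeRep_hG (w : Equiv.Perm (Fin n)) : freeRep u M (hG w) = wOp M w := by
  simp [freeRep, hG, generatorOp]

theorem freeRep_RA (j i : Fin n) :
    freeRep u M (RA n u j i) = dunklCommutator u (reflOp M) j i := by
  rw [RA, dunklCommutator]
  split_ifs
  · rw [map_neg, map_smul, map_sum]
    simp [reflOp]
  · simp [reflOp]

theorem freeRep_eq_of_hRel ⦃a b : HF n (Equiv.Perm (Fin n))⦄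
    (h : HRel n (Equiv.Perm (Fin n)) (actA n) (RA n u) a b) : freeRep u M a = freeRep u M b := by
  cases h with
  | cc i => simpa using cOp_mul_self i
  | canti h => simpa using cOp_mul_cOp_of_ne h
  | xx i j => simpa using (commute_xOp M i j).eq
  | yy i j => simpa using (commute_yOp u i j).eq
  | yc i j => simpa using (commute_yOp_cOp u i j).eq
  | xcs i => simpa using xOp_mul_cOp_self i
  | xc h => simpa using xOp_mul_cOp_of_ne h
  | gone => simpa using wOp_one
  | gmul w w' => simpa using wOp_mul w w'
  | gx w i => simpa [actA] using wOp_mul_xOp w i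
  | gy w i => simpa [actA] using wOp_mul_yOp u w i
  | gc w i => simpa [actA] using wOp_mul_cOp w i
  | yx j i => simpa [freeRep_RA] using sub_eq_iff_eq_add'.mp (lie_yOp_xOp u j i)

def dunklRep : HCA n u →ₐ[ℂ] Module.End ℂ (MvPolynomial (Fin n) ℂ ⊗[ℂ] M) :=
  RingQuot.liftAlgHom ℂ ⟨freeRep u M, freeRep_eq_of_hRel u M⟩

@[simp] theorem dunklRep_xA (i : Fin n) : dunklRep u M (xA i) = xOp M i := by
  simp [dunklRep, xA, dX]

@[simp] theorem dunklRep_yA (i : Fin n) : dunklRep u M (yA i) = yOp u M i := by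
  simp [dunklRep, yA, dY]

@[simp] theorem dunklRep_cA (i : Fin n) : dunklRep u M (cA i) = cOp M i := by
  simp [dunklRep, cA, dC]

@[simp] theorem dunklRep_gA (w : Equiv.Perm (Fin n)) : dunklRep u M (gA w) = wOp M w := by
  simp [dunklRep, gA, dG]

end Representation

end Dunkl

/-- **Dunkl operator representation of `H^c_{A_{n-1}}(u)` on `ℂ[x] ⊗ M`**
(Khongsap-Wang, Theorem 3.3).  For `M` a module over `C_n ⋊ ℂS_n`, the operators:
`x_i` = multiplication by `x_i`, `w·(f ⊗ m) = f^w ⊗ wm`, `c_i·(f ⊗ m) = f^{τ_i} ⊗ c_i m`,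
and `y_i` = the Dunkl operator
`y_i·(f ⊗ m) = -u Σ_{k≠i} (((f-f^{s_{ki}})/(x_i-x_k)) ⊗ s_{ki}m + ((f-f^{s̄_{ki}})/(x_i+x_k)) ⊗ c_k c_i s_{ki} m)`
define a representation of `H^c_{A_{n-1}}(u)`. -/
theorem dunkl_representation_y_A (n : ℕ) (u : ℂ) (M : Type) [AddCommGroup M] [Module ℂ M]
    [Module (Smash n (Equiv.Perm (Fin n)) (actA n)) M]
    [IsScalarTower ℂ (Smash n (Equiv.Perm (Fin n)) (actA n)) M] :
    (∀ (f : MvPolynomial (Fin n) ℂ) (i k : Fin n), k ≠ i →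
      (∃! g : MvPolynomial (Fin n) ℂ,
        (MvPolynomial.X i - MvPolynomial.X k) * g
          = f - MvPolynomial.rename (Equiv.swap k i) f) ∧
      (∃! h : MvPolynomial (Fin n) ℂ,
        (MvPolynomial.X i + MvPolynomial.X k) * h
          = f - MvPolynomial.aeval
              (fun j => if j = i then -(MvPolynomial.X k) else
                if j = k then -(MvPolynomial.X i) else (MvPolynomial.X j : MvPolynomial (Fin n) ℂ)) f)) ∧
    ∃ ρ : HCA n u →ₐ[ℂ] Module.End ℂ (MvPolynomial (Fin n) ℂ ⊗[ℂ] M),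
      (∀ (i : Fin n) (f : MvPolynomial (Fin n) ℂ) (m : M),
        ρ (xA i) (f ⊗ₜ[ℂ] m) = (MvPolynomial.X i * f) ⊗ₜ[ℂ] m) ∧
      (∀ (w : Equiv.Perm (Fin n)) (f : MvPolynomial (Fin n) ℂ) (m : M),
        ρ (gA w) (f ⊗ₜ[ℂ] m)
          = (MvPolynomial.rename w f) ⊗ₜ[ℂ] ((kG (actA n) w) • m)) ∧
      (∀ (i : Fin n) (f : MvPolynomial (Fin n) ℂ) (m : M),
        ρ (cA i) (f ⊗ₜ[ℂ] m)
          = (MvPolynomial.aeval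
              (fun j => if j = i then -(MvPolynomial.X j) else
                (MvPolynomial.X j : MvPolynomial (Fin n) ℂ)) f) ⊗ₜ[ℂ] ((kC (actA n) i) • m)) ∧
      (∀ (i : Fin n) (f : MvPolynomial (Fin n) ℂ)
          (g h : Fin n → MvPolynomial (Fin n) ℂ) (m : M),
        (∀ k, k ≠ i → (MvPolynomial.X i - MvPolynomial.X k) * g k
            = f - MvPolynomial.rename (Equiv.swap k i) f) →
        (∀ k, k ≠ i → (MvPolynomial.X i + MvPolynomial.X k) * h k
            = f - MvPolynomial.aeval
                (fun j => if j = i then -(MvPolynomial.X k) else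
                  if j = k then -(MvPolynomial.X i) else (MvPolynomial.X j : MvPolynomial (Fin n) ℂ)) f) →
        ρ (yA i) (f ⊗ₜ[ℂ] m)
          = -(u • ∑ k ∈ Finset.univ.erase i,
              ((g k) ⊗ₜ[ℂ] ((kG (actA n) (Equiv.swap k i)) • m)
               + (h k) ⊗ₜ[ℂ]
                  ((kC (actA n) k * kC (actA n) i * kG (actA n) (Equiv.swap k i)) • m)))) := by
  refine ⟨fun f i k hk => ⟨⟨Dunkl.divDiffSwap k i f, Dunkl.mul_divDiffSwap hk f,
      fun g hg => (Dunkl.divDiffSwap_eq_of_mul_eq hk hg).symm⟩,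
    ⟨Dunkl.divDiffBar k i f, Dunkl.mul_divDiffBar hk f,
      fun h hh => (Dunkl.divDiffBar_eq_of_mul_eq hk hh).symm⟩⟩,
    Dunkl.dunklRep u M, fun i f m => by rw [Dunkl.dunklRep_xA]; rfl,
    fun w f m => by rw [Dunkl.dunklRep_gA]; rfl, fun i f m => by rw [Dunkl.dunklRep_cA]; rfl,
    fun i f g h m hg hh => ?_⟩
  rw [Dunkl.dunklRep_yA, Dunkl.yOp_tmul]
  refine congrArg (fun s => -(u • s)) (Finset.sum_congr rfl fun k hk => ?_)
  have hki := Finset.ne_of_mem_erase hk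
  rw [Dunkl.dunklTerm_tmul, Dunkl.divDiffSwap_eq_of_mul_eq hki (hg k hki),
    Dunkl.divDiffBar_eq_of_mul_eq hki (hh k hki)]
  rfl
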